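/- Let S ∈ O(d)^{⊗n} with d_F(S, Z) ≤ (ε/2)√(nd), where Z has n identity blocks. Then there exists R ∈ O(d) with ‖Z^⊤S − nR‖_F ≤ ε²nd/8. -/

import Mathlib

open Matrix BigOperators

noncomputable def frob {m n : Type*} [Fintype m] [Fintype n] (A : Matrix m n ℝ) : ℝ :=
  Real.sqrt (∑ i, ∑ j, (A i j) ^ 2)

def IsOrtho {d : ℕ} (Q : Matrix (Fin d) (Fin d) ℝ) : Prop :=
  Q * Qᵀ = 1 ∧ Qᵀ * Q = 1

noncomputable def dF {m : Type*} [Fintype m] {d : ℕ}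
    (X Y : Matrix m (Fin d) ℝ) : ℝ :=
  sInf {r : ℝ | ∃ Q : Matrix (Fin d) (Fin d) ℝ, IsOrtho Q ∧ r = frob (X - Y * Q)}

def Zmat (n d : ℕ) : Matrix (Fin n × Fin d) (Fin d) ℝ :=
  Matrix.of fun p j => if p.2 = j then 1 else 0

def blk {n d : ℕ} (X : Matrix (Fin n × Fin d) (Fin d) ℝ) (i : Fin n) :
    Matrix (Fin d) (Fin d) ℝ :=
  Matrix.of fun a b => X (i, a) b

/-!
Let `M = ZᵀS = ∑ᵢ Sᵢ` and let `R` maximise `tr (RᵀM)` over the compact group `O(d)`.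
Optimality against Givens rotations makes `P = RᵀM` symmetric, and `vᵀPv = ∑ᵢ ⟨Rv, Sᵢv⟩ ≤ n‖v‖²`
makes `N = n • 1 - P` positive semidefinite. Since `‖S - ZQ‖_F² = 2 (nd - tr (QᵀM))` for every
`Q ∈ O(d)`, the hypothesis gives `tr N ≤ ε²nd/8`. Finally `M - nR = -RN`, so
`‖M - nR‖_F² = tr (N²) ≤ (tr N)²`, the last step holding for every positive semidefinite `N`.
-/

lemma frob_sq {m n : Type*} [Fintype m] [Fintype n] (A : Matrix m n ℝ) :
    frob A ^ 2 = trace (Aᵀ * A) := by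
  rw [frob, Real.sq_sqrt (by positivity)]
  simp only [trace, diag_apply, mul_apply, transpose_apply]
  rw [Finset.sum_comm]
  simp only [sq]

lemma frob_nonneg {m n : Type*} [Fintype m] [Fintype n] (A : Matrix m n ℝ) : 0 ≤ frob A :=
  Real.sqrt_nonneg _

lemma frob_eq_sqrt_trace {m n : Type*} [Fintype m] [Fintype n] (A : Matrix m n ℝ) :
    frob A = √(trace (Aᵀ * A)) := by
  rw [← frob_sq, Real.sqrt_sq (frob_nonneg A)]

lemma isOrtho_iff_mem_unitaryGroup {d : ℕ} {Q : Matrix (Fin d) (Fin d) ℝ} :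
    IsOrtho Q ↔ Q ∈ unitaryGroup (Fin d) ℝ := by
  rw [Unitary.mem_iff, star_eq_conjTranspose, conjTranspose_eq_transpose_of_trivial, IsOrtho,
    and_comm]

lemma isCompact_unitaryGroup (n 𝕜 : Type*) [Fintype n] [DecidableEq n] [RCLike 𝕜] :
    IsCompact (unitaryGroup n 𝕜 : Set (Matrix n n 𝕜)) :=
  (isCompact_closedBall (0 : 𝕜) 1).matrix.of_isClosed_subset isClosed_unitary
    fun _ hU i j => mem_closedBall_zero_iff.mpr (entry_norm_bound_of_unitary hU i j)

lemma exists_isOrtho_forall_trace_le {d : ℕ} (M : Matrix (Fin d) (Fin d) ℝ) :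
    ∃ R, IsOrtho R ∧ ∀ Q, IsOrtho Q → trace (Qᵀ * M) ≤ trace (Rᵀ * M) := by
  obtain ⟨R, hR, hmax⟩ := (isCompact_unitaryGroup (Fin d) ℝ).exists_isMaxOn
    ⟨1, (unitaryGroup (Fin d) ℝ).one_mem⟩
    (by fun_prop : Continuous fun Q => trace (Qᵀ * M)).continuousOn
  exact ⟨R, isOrtho_iff_mem_unitaryGroup.mpr hR,
    fun Q hQ => hmax (isOrtho_iff_mem_unitaryGroup.mp hQ)⟩

lemma IsOrtho.mul {d : ℕ} {A B : Matrix (Fin d) (Fin d) ℝ} (hA : IsOrtho A) (hB : IsOrtho B) :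
    IsOrtho (A * B) := by
  rw [isOrtho_iff_mem_unitaryGroup] at *
  exact (unitaryGroup (Fin d) ℝ).mul_mem hA hB

noncomputable def givens {d : ℕ} (i j : Fin d) (c s : ℝ) : Matrix (Fin d) (Fin d) ℝ :=
  1 + single i i (c - 1) + single j j (c - 1) + single i j s + single j i (-s)

lemma isOrtho_givens {d : ℕ} {i j : Fin d} (hij : i ≠ j) {c s : ℝ} (h : c ^ 2 + s ^ 2 = 1) :
    IsOrtho (givens i j c s) := by
  constructor <;>
  · simp only [givens, transpose_add, transpose_one, transpose_single, Matrix.add_mul,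
      Matrix.mul_add, Matrix.one_mul, Matrix.mul_one, single_mul_single_same,
      single_mul_single_of_ne, hij, hij.symm, ne_eq, not_false_iff]
    ext a b
    simp only [Matrix.add_apply, Matrix.zero_apply, single, of_apply]
    by_cases hai : a = i <;> by_cases haj : a = j <;> by_cases hbi : b = i <;>
      by_cases hbj : b = j <;> simp_all [Matrix.one_apply, eq_comm] <;> nlinarith [h]

lemma trace_givens_transpose_mul {d : ℕ} (i j : Fin d) (c s : ℝ) (P : Matrix (Fin d) (Fin d) ℝ) :
    trace ((givens i j c s)ᵀ * P) =
      trace P + (c - 1) * (P i i + P j j) + s * (P i j - P j i) := by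
  simp only [givens, transpose_add, transpose_one, transpose_single, Matrix.add_mul,
    Matrix.one_mul, trace_add, trace_single_mul, smul_eq_mul]
  ring

lemma eq_zero_of_forall_mul_le_sq_mul {a b : ℝ} (h : ∀ u : ℝ, u * b ≤ u ^ 2 * a) : b = 0 := by
  have hk : 0 < |a| + 1 := by positivity
  have := h (b / (|a| + 1))
  rw [div_pow, div_mul_eq_mul_div, div_mul_eq_mul_div, div_le_div_iff₀ hk (by positivity)] at this
  have h2 : b ^ 2 * (|a| + 1) ≤ b ^ 2 * a := le_of_mul_le_mul_right (by linarith) hk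
  have h3 : b ^ 2 ≤ 0 := by nlinarith [mul_le_mul_of_nonneg_left (le_abs_self a) (sq_nonneg b)]
  exact pow_eq_zero_iff (n := 2) two_ne_zero |>.mp (le_antisymm h3 (sq_nonneg b))

lemma transpose_eq_self_of_forall_trace_le {d : ℕ} {P : Matrix (Fin d) (Fin d) ℝ}
    (hmax : ∀ G, IsOrtho G → trace (Gᵀ * P) ≤ trace P) : Pᵀ = P := by
  ext j i
  rcases eq_or_ne i j with rfl | hij
  · rfl
  suffices P i j - P j i = 0 by simp only [transpose_apply]; linarith
  refine eq_zero_of_forall_mul_le_sq_mul (a := P i i + P j j) fun u => ?_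
  -- the rotation in the `(i, j)`-plane by the angle `θ` with `tan (θ / 2) = u`
  have hcs : ((1 - u ^ 2) / (1 + u ^ 2)) ^ 2 + (2 * u / (1 + u ^ 2)) ^ 2 = 1 := by
    field_simp; ring
  have h := hmax _ (isOrtho_givens hij hcs)
  rw [trace_givens_transpose_mul] at h
  field_simp at h
  linarith

lemma transpose_mul_eq_sum_blk {n d : ℕ} (X Y : Matrix (Fin n × Fin d) (Fin d) ℝ) :
    Xᵀ * Y = ∑ i, (blk X i)ᵀ * blk Y i := by
  ext a b
  simp only [mul_apply, Matrix.sum_apply, Fintype.sum_prod_type, transpose_apply, blk, of_apply]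

lemma blk_Zmat {n d : ℕ} (i : Fin n) : blk (Zmat n d) i = 1 := by
  ext a b
  simp [blk, Zmat, one_apply]

lemma blk_sub {n d : ℕ} (X Y : Matrix (Fin n × Fin d) (Fin d) ℝ) (i : Fin n) :
    blk (X - Y) i = blk X i - blk Y i := rfl

lemma blk_mul {n d : ℕ} (X : Matrix (Fin n × Fin d) (Fin d) ℝ) (Q : Matrix (Fin d) (Fin d) ℝ)
    (i : Fin n) : blk (X * Q) i = blk X i * Q := rfl

lemma Zmat_transpose_mul {n d : ℕ} (S : Matrix (Fin n × Fin d) (Fin d) ℝ) :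
    (Zmat n d)ᵀ * S = ∑ i, blk S i := by
  simp [transpose_mul_eq_sum_blk, blk_Zmat]

lemma trace_transpose_mul_self_sub {m : Type*} [Fintype m] [DecidableEq m]
    {A B : Matrix m m ℝ} (hA : Aᵀ * A = 1) (hB : Bᵀ * B = 1) :
    trace ((A - B)ᵀ * (A - B)) = 2 * Fintype.card m - 2 * trace (Bᵀ * A) := by
  have hBA : trace (Aᵀ * B) = trace (Bᵀ * A) := by
    rw [← trace_transpose, transpose_mul, transpose_transpose]
  simp only [transpose_sub, Matrix.sub_mul, Matrix.mul_sub, trace_sub, hA, hB, hBA, trace_one]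
  ring

lemma frob_sub_Zmat_mul_sq {n d : ℕ} {S : Matrix (Fin n × Fin d) (Fin d) ℝ}
    (hS : ∀ i, IsOrtho (blk S i)) {Q : Matrix (Fin d) (Fin d) ℝ} (hQ : IsOrtho Q) :
    frob (S - Zmat n d * Q) ^ 2 = 2 * (n * d - trace (Qᵀ * ((Zmat n d)ᵀ * S))) := by
  rw [frob_sq, transpose_mul_eq_sum_blk, trace_sum, Zmat_transpose_mul,
    Matrix.mul_sum, trace_sum]
  simp only [blk_sub, blk_mul, blk_Zmat, Matrix.one_mul,
    trace_transpose_mul_self_sub (hS _).2 hQ.2, Finset.sum_sub_distrib, Finset.sum_const,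
    Finset.card_univ, Fintype.card_fin, nsmul_eq_mul, ← Finset.mul_sum]
  ring

lemma dotProduct_transpose_mul_mulVec_le {m n : Type*} [Fintype m] [Fintype n] [DecidableEq n]
    {A B : Matrix m n ℝ} (hA : Aᵀ * A = 1) (hB : Bᵀ * B = 1) (v : n → ℝ) :
    v ⬝ᵥ ((Aᵀ * B) *ᵥ v) ≤ v ⬝ᵥ v := by
  have hdot (C D : Matrix m n ℝ) : (C *ᵥ v) ⬝ᵥ (D *ᵥ v) = v ⬝ᵥ ((Cᵀ * D) *ᵥ v) := by
    rw [dotProduct_mulVec, vecMul_mulVec, ← dotProduct_mulVec]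
  have hsq : 0 ≤ (A *ᵥ v - B *ᵥ v) ⬝ᵥ (A *ᵥ v - B *ᵥ v) :=
    Finset.sum_nonneg fun i _ => mul_self_nonneg _
  simp only [sub_dotProduct, dotProduct_sub, hdot, hA, hB, one_mulVec] at hsq
  have hcomm : v ⬝ᵥ ((Bᵀ * A) *ᵥ v) = v ⬝ᵥ ((Aᵀ * B) *ᵥ v) := by
    rw [← hdot, ← hdot, dotProduct_comm]
  linarith

lemma Matrix.PosSemidef.trace_mul_self_le_sq_trace {n : Type*} [Fintype n] [DecidableEq n]
    {N : Matrix n n ℝ} (hN : N.PosSemidef) : trace (N * N) ≤ trace N ^ 2 := by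
  have hsq : trace (N * N) = ∑ i, hN.isHermitian.eigenvalues i ^ 2 := by
    conv_lhs => rw [hN.isHermitian.spectral_theorem, ← map_mul, Unitary.conjStarAlgAut_apply,
      trace_mul_cycle, Unitary.coe_star_mul_self, one_mul, diagonal_mul_diagonal, trace_diagonal]
    simp [sq]
  rw [hsq, hN.isHermitian.trace_eq_sum_eigenvalues]
  exact Finset.sum_sq_le_sq_sum_of_nonneg fun i _ => by simpa using hN.eigenvalues_nonneg i

lemma posSemidef_card_smul_one_sub_transpose_mul_sum {ι m n : Type*} [Fintype ι] [Fintype m]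
    [Fintype n] [DecidableEq n] {A : Matrix m n ℝ} {B : ι → Matrix m n ℝ} (hA : Aᵀ * A = 1)
    (hB : ∀ i, (B i)ᵀ * B i = 1) (hsymm : (Aᵀ * ∑ i, B i)ᵀ = Aᵀ * ∑ i, B i) :
    ((Fintype.card ι : ℝ) • 1 - Aᵀ * ∑ i, B i).PosSemidef := by
  refine .of_dotProduct_mulVec_nonneg ?_ fun v => ?_
  · rw [IsHermitian, conjTranspose_eq_transpose_of_trivial, transpose_sub, transpose_smul,
      transpose_one, hsymm]
  · have hle : v ⬝ᵥ ((Aᵀ * ∑ i, B i) *ᵥ v) ≤ Fintype.card ι * (v ⬝ᵥ v) := by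
      rw [Matrix.mul_sum, sum_mulVec, dotProduct_sum, ← nsmul_eq_mul, ← Finset.card_univ,
        ← Finset.sum_const]
      exact Finset.sum_le_sum fun i _ => dotProduct_transpose_mul_mulVec_le hA (hB i) v
    rw [star_trivial, sub_mulVec, dotProduct_sub, smul_mulVec, one_mulVec, dotProduct_smul,
      smul_eq_mul]
    linarith

lemma frob_sub_smul_le_trace {d : ℕ} {M R : Matrix (Fin d) (Fin d) ℝ} (hR : IsOrtho R) {c : ℝ}
    (hN : (c • 1 - Rᵀ * M).PosSemidef) : frob (M - c • R) ≤ trace (c • 1 - Rᵀ * M) := by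
  set N := c • 1 - Rᵀ * M
  have hfac : M - c • R = -(R * N) := by
    rw [Matrix.mul_sub, ← Matrix.mul_assoc, hR.1, Matrix.one_mul, Matrix.mul_smul, Matrix.mul_one,
      neg_sub]
  have hNsymm : Nᵀ = N := (conjTranspose_eq_transpose_of_trivial N).symm.trans hN.isHermitian
  calc frob (M - c • R) = √(trace (N * N)) := by
        rw [frob_eq_sqrt_trace, hfac, transpose_neg, neg_mul_neg, transpose_mul, Matrix.mul_assoc,
          ← Matrix.mul_assoc Rᵀ, hR.2, Matrix.one_mul, hNsymm]
    _ ≤ √(trace N ^ 2) := Real.sqrt_le_sqrt hN.trace_mul_self_le_sq_trace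
    _ = trace N := Real.sqrt_sq hN.trace_nonneg

lemma le_dF {m : Type*} [Fintype m] {d : ℕ} {X Y : Matrix m (Fin d) ℝ} {r : ℝ}
    (h : ∀ Q : Matrix (Fin d) (Fin d) ℝ, IsOrtho Q → r ≤ frob (X - Y * Q)) : r ≤ dF X Y :=
  le_csInf ⟨_, 1, ⟨by simp, by simp⟩, rfl⟩ (by rintro _ ⟨Q, hQ, rfl⟩; exact h Q hQ)

/-- If `d_F(S, Z) ≤ (ε/2)√(nd)` then `ZᵀS` is within `ε²nd/8` (in Frobenius norm)
of `n` times some orthogonal matrix. -/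
theorem ZtS_close_to_scaled_orthogonal (n d : ℕ) (ε : ℝ)
    (S : Matrix (Fin n × Fin d) (Fin d) ℝ)
    (hS : ∀ i : Fin n, IsOrtho (blk S i))
    (hclose : dF S (Zmat n d) ≤ ε / 2 * Real.sqrt (n * d)) :
    ∃ R : Matrix (Fin d) (Fin d) ℝ, IsOrtho R ∧
      frob ((Zmat n d)ᵀ * S - (n : ℝ) • R) ≤ ε ^ 2 * n * d / 8 := by
  obtain ⟨R, hR, hmax⟩ := exists_isOrtho_forall_trace_le ((Zmat n d)ᵀ * S)
  set P := Rᵀ * ((Zmat n d)ᵀ * S)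
  have hPsymm : Pᵀ = P := transpose_eq_self_of_forall_trace_le fun G hG => by
    simpa only [transpose_mul, Matrix.mul_assoc] using hmax _ (hR.mul hG)
  set N := (n : ℝ) • (1 : Matrix (Fin d) (Fin d) ℝ) - P with hN
  have hNpsd : N.PosSemidef := by
    have := posSemidef_card_smul_one_sub_transpose_mul_sum hR.2 (fun i => (hS i).2)
      (by rwa [← Zmat_transpose_mul])
    rwa [Fintype.card_fin, ← Zmat_transpose_mul] at this
  have htrN : trace N = n * d - trace P := by
    simp [hN, trace_sub, trace_smul]
  have hdist : √(2 * trace N) ≤ dF S (Zmat n d) := le_dF fun Q hQ =>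
    (Real.sqrt_le_left (frob_nonneg _)).mpr <| by
      rw [frob_sub_Zmat_mul_sq hS hQ, htrN]
      linarith [hmax Q hQ]
  have htr : trace N ≤ ε ^ 2 * n * d / 8 := by
    have := (Real.sqrt_le_iff.mp (hdist.trans hclose)).2
    rw [mul_pow, Real.sq_sqrt (by positivity)] at this
    linarith
  exact ⟨R, hR, (frob_sub_smul_le_trace hR hNpsd).trans htr⟩
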